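/- arXiv:1803.09372 — 4 statements merged into one kernel-verified Lean document; each statement's English description precedes it below -/
import Mathlib

section
/- For all real x not in πℤ, the series ∑_{j=1}^∞ 1/((πj)² − x²) converges and equals (1/2)(1/x² − cos(x)/(x sin(x))). -/
/-
The series is the Mittag-Leffler expansion of the cotangent,
`π cot (π u) - 1 / u = ∑ₙ (1 / (u - n) + 1 / (u + n))`, which comes from the logarithmic derivative
of Euler's sine product: putting `u = x / π` and combining each pair of fractions into
`2 π x / (x ^ 2 - (π n) ^ 2)` gives the claim.
-/

open Real

namespace Complex

lemma hasSum_cotTerm {x : ℂ} (hx : x ∈ integerComplement) :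
    HasSum (cotTerm x) (π * cot (π * x) - 1 / x) :=
  (summable_cotTerm hx).hasSum_iff_tendsto_nat.mpr (tendsto_logDeriv_euler_cot_sub hx)

lemma div_pi_mem_integerComplement {z : ℂ} (hz : ∀ n : ℤ, z ≠ π * n) :
    z / π ∈ integerComplement := by
  rintro ⟨n, hn⟩
  exact hz n (by rw [hn, mul_div_cancel₀ _ (ofReal_ne_zero.mpr pi_ne_zero)])

theorem hasSum_inv_pi_mul_sq_sub_sq {z : ℂ} (hz : ∀ n : ℤ, z ≠ π * n) :
    HasSum (fun j : ℕ => 1 / ((π * (j + 1 : ℕ)) ^ 2 - z ^ 2))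
      ((1 / 2) * (1 / z ^ 2 - cot z / z)) := by
  have hπ : (π : ℂ) ≠ 0 := ofReal_ne_zero.mpr pi_ne_zero
  have hz0 : z ≠ 0 := by simpa using hz 0
  have hzπ := div_pi_mem_integerComplement hz
  have hterm (j : ℕ) :
      -1 / (2 * π * z) * cotTerm (z / π) j = 1 / ((π * (j + 1 : ℕ)) ^ 2 - z ^ 2) := by
    have h₁ : z - π * (j + 1) ≠ 0 := sub_ne_zero.mpr (by exact_mod_cast hz (j + 1))
    have h₂ : z + π * (j + 1) ≠ 0 := fun h ↦ hz (-(j + 1)) (by push_cast; linear_combination h)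
    rw [cotTerm_identity hzπ]
    push_cast
    rw [show (π * (j + 1)) ^ 2 - z ^ 2 = -((z + π * (j + 1)) * (z - π * (j + 1))) by ring]
    field_simp
  have hsum : -1 / (2 * π * z) * (π * cot (π * (z / π)) - 1 / (z / π))
      = (1 / 2) * (1 / z ^ 2 - cot z / z) := by
    rw [mul_div_cancel₀ _ hπ]
    field_simp
    ring
  simpa only [hterm, hsum] using (hasSum_cotTerm hzπ).mul_left (-1 / (2 * π * z))

end Complex

theorem sum_inv_pi_sq_sub_sq (x : ℝ) (hx : ∀ n : ℤ, x ≠ π * n) :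
    HasSum (fun j : ℕ => 1 / ((π * (j + 1 : ℕ)) ^ 2 - x ^ 2))
      ((1 / 2) * (1 / x ^ 2 - Real.cos x / (x * Real.sin x))) := by
  have hxC : ∀ n : ℤ, (x : ℂ) ≠ π * n := fun n h ↦ hx n (by exact_mod_cast h)
  rw [← Complex.hasSum_ofReal]
  push_cast
  simpa only [Complex.cot_eq_cos_div_sin, div_div, mul_comm (Complex.sin _), Nat.cast_add,
    Nat.cast_one] using Complex.hasSum_inv_pi_mul_sq_sub_sq hxC
end

section
/- For all real x not in πℤ, the series ∑_{j=1}^∞ (−1)^j/((πj)² − x²) converges and equals (1/2)(1/x² − 1/(x sin x)). -/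
/-!
Summing the Mittag-Leffler expansion of the cotangent gives
`∑_{n ≥ 1} 1 / ((π n)² - x²) = 1 / (2 x²) - cot x / (2 x)`. The alternating series is twice its
even-indexed part minus the full series, and the even-indexed part is a quarter of the same series
at `x / 2`; the two cotangents combine through `cot (x / 2) - cot x = 1 / sin x`.
-/

open Real

theorem HasSum.alternating_of_hasSum_odd {α : Type*} [Ring α] [UniformSpace α]
    [IsUniformAddGroup α] [CompleteSpace α] [T2Space α] {f : ℕ → α} {a b : α} (hf : HasSum f a)
    (hodd : HasSum (fun k => f (2 * k + 1)) b) :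
    HasSum (fun n => (-1) ^ n * f n) (a - 2 * b) := by
  have heven : HasSum (fun k => f (2 * k)) (a - b) := by
    have hs : Summable (fun k => f (2 * k)) :=
      hf.summable.comp_injective (mul_right_injective₀ (two_ne_zero' ℕ))
    obtain ⟨e, he⟩ := hs
    rwa [hf.unique (he.even_add_odd hodd), add_sub_cancel_right]
  convert HasSum.even_add_odd (f := fun n => (-1) ^ n * f n) (by simpa [pow_mul] using heven)
    (by simpa [pow_succ, pow_mul] using hodd.neg) using 1
  noncomm_ring

theorem Real.cot_half_sub_cot (x : ℝ) : cot (x / 2) - cot x = 1 / sin x := by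
  obtain ⟨y, rfl⟩ : ∃ y, x = 2 * y := ⟨x / 2, by ring⟩
  rw [mul_div_cancel_left₀ _ two_ne_zero, cot_eq_cos_div_sin, cot_eq_cos_div_sin, sin_two_mul,
    cos_two_mul]
  rcases eq_or_ne (sin y) 0 with hs | hs
  · simp [hs]
  rcases eq_or_ne (cos y) 0 with hc | hc
  · simp [hc]
  field_simp
  ring

theorem Real.hasSum_cot_series {y : ℝ} (hy : ∀ n : ℤ, y ≠ n) :
    HasSum (fun n : ℕ => 1 / (y - (n + 1)) + 1 / (y + (n + 1))) (π * cot (π * y) - 1 / y) := by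
  have hy' : (y : ℂ) ∈ Complex.integerComplement := by
    rintro ⟨n, hn⟩
    exact hy n (by exact_mod_cast hn.symm)
  rw [← Complex.hasSum_ofReal]
  push_cast
  rw [cot_series_rep' hy']
  exact (summable_cotTerm hy').hasSum

theorem Real.hasSum_one_div_pi_mul_sq_sub_sq {x : ℝ} (hx : ∀ n : ℤ, x ≠ π * n) :
    HasSum (fun n : ℕ => 1 / ((π * (n + 1)) ^ 2 - x ^ 2)) (1 / (2 * x ^ 2) - cot x / (2 * x)) := by
  obtain ⟨y, rfl⟩ : ∃ y, x = π * y := ⟨x / π, by field_simp⟩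
  have hy : ∀ n : ℤ, y ≠ n := fun n h => hx n (by rw [h])
  have hy0 : y ≠ 0 := by simpa using hy 0
  have hsum : 1 / (2 * (π * y) ^ 2) - cot (π * y) / (2 * (π * y))
      = -(1 / (2 * π * (π * y))) * (π * cot (π * y) - 1 / y) := by
    field_simp
    ring
  rw [hsum]
  refine ((hasSum_cot_series hy).mul_left _).congr_fun fun n => ?_
  have h₁ : y - (n + 1) ≠ 0 := sub_ne_zero.mpr (by exact_mod_cast hy (n + 1))
  have h₂ : y + (n + 1) ≠ 0 := by
    rw [← sub_neg_eq_add]; exact sub_ne_zero.mpr (by exact_mod_cast hy (-(n + 1)))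
  have h₃ : ((n : ℝ) + 1) ^ 2 - y ^ 2 ≠ 0 := by
    rw [show ((n : ℝ) + 1) ^ 2 - y ^ 2 = -((y - (n + 1)) * (y + (n + 1))) by ring]
    exact neg_ne_zero.mpr (mul_ne_zero h₁ h₂)
  field_simp
  ring

theorem sum_alt_inv_pi_sq_sub_sq (x : ℝ) (hx : ∀ n : ℤ, x ≠ π * n) :
    HasSum (fun j : ℕ => (-1 : ℝ) ^ (j + 1) / ((π * (j + 1 : ℕ)) ^ 2 - x ^ 2))
      ((1 / 2) * (1 / x ^ 2 - 1 / (x * Real.sin x))) := by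
  have hx0 : x ≠ 0 := by simpa using hx 0
  have hsum := hasSum_one_div_pi_mul_sq_sub_sq hx
  have hsum_half := hasSum_one_div_pi_mul_sq_sub_sq (x := x / 2) fun n h =>
    hx (2 * n) (by push_cast; linarith)
  have hodd : HasSum (fun k : ℕ => 1 / ((π * ((2 * k + 1 : ℕ) + 1)) ^ 2 - x ^ 2))
      (1 / 4 * (1 / (2 * (x / 2) ^ 2) - cot (x / 2) / (2 * (x / 2)))) :=
    (hsum_half.mul_left (1 / 4)).congr_fun fun k => by
      push_cast
      rw [show (π * (2 * k + 1 + 1)) ^ 2 - x ^ 2 = 4 * ((π * (k + 1)) ^ 2 - (x / 2) ^ 2) by ring,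
        one_div_mul_one_div]
  have hval : 1 / 2 * (1 / x ^ 2 - 1 / (x * sin x)) = -(1 / (2 * x ^ 2) - cot x / (2 * x)
      - 2 * (1 / 4 * (1 / (2 * (x / 2) ^ 2) - cot (x / 2) / (2 * (x / 2))))) := by
    rw [← one_div_mul_one_div, ← cot_half_sub_cot]
    field_simp
    ring
  rw [hval]
  exact (hsum.alternating_of_hasSum_odd hodd).neg.congr_fun fun j => by
    push_cast
    ring
end

section
/- The operator A on L²(0,l₂) ⊕ ℂ defined on pairs (u, β) with u ∈ H²(0,l₂), u(0) = w̄ u(l₂) = β/√(l₁+l₃) (for a fixed unimodular w ∈ ℂ), by A(u,β) = ( (−i d/dx + τ)² u , (1/√(l₁+l₃)) [ −(u'+iτu)(0) + w̄ (u'+iτu)(l₂) + (σt)²β/√(l₁+l₃) ] ) is symmetric: ⟨A(u,β),(v,γ)⟩ = ⟨(u,β),A(v,γ)⟩ for all (u,β),(v,γ) in the domain. -/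
/-!
Integrating by parts twice, `⟨A₁u, v⟩ − ⟨u, A₁v⟩` equals the jump of the Wronskian
`u · conj (v' + iτv) − (u' + iτu) · conj v` between `0` and `l₂`. Under the quasiperiodicity
`u(0) = w̄ u(l₂)` with `|w| = 1` this jump is exactly what the boundary component `A₂` contributes
with the opposite sign, while the `(σt)²` terms of `A₂` are symmetric on their own.
-/

open Real Complex intervalIntegral

open scoped ComplexConjugate

noncomputable def magneticFlux (τ : ℝ) (f : ℝ → ℂ) (x : ℝ) : ℂ :=
  deriv f x + I * τ * f x

noncomputable def magneticLaplacian (τ : ℝ) (f : ℝ → ℂ) (x : ℝ) : ℂ :=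
  -(deriv (deriv f) x) - 2 * I * τ * deriv f x + (τ ^ 2 : ℝ) * f x

noncomputable def magneticWronskian (τ : ℝ) (u v : ℝ → ℂ) (x : ℝ) : ℂ :=
  u x * conj (magneticFlux τ v x) - magneticFlux τ u x * conj (v x)

noncomputable def magneticFluxJump (τ : ℝ) (w : ℂ) (l : ℝ) (f : ℝ → ℂ) : ℂ :=
  -magneticFlux τ f 0 + conj w * magneticFlux τ f l

section

variable (τ : ℝ) {u v : ℝ → ℂ}

theorem continuous_magneticLaplacian (hu : ContDiff ℝ 2 u) :
    Continuous (magneticLaplacian τ u) := by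
  have hu'' : Continuous (deriv (deriv u)) := (hu.deriv' (n := 1)).continuous_deriv_one
  have hu' : Continuous (deriv u) := hu.continuous_deriv (by norm_num)
  have hu₀ : Continuous u := hu.continuous
  unfold magneticLaplacian
  fun_prop

theorem hasDerivAt_magneticWronskian (hu : ContDiff ℝ 2 u) (hv : ContDiff ℝ 2 v) (x : ℝ) :
    HasDerivAt (magneticWronskian τ u v)
      (magneticLaplacian τ u x * conj (v x) - u x * conj (magneticLaplacian τ v x)) x := by
  have hu₁ := (hu.differentiable two_ne_zero x).hasDerivAt
  have hv₁ := (hv.differentiable two_ne_zero x).hasDerivAt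
  have hu₂ := (hu.differentiable_deriv_two x).hasDerivAt
  have hv₂ := (hv.differentiable_deriv_two x).hasDerivAt
  have hfu := hu₂.add (hu₁.const_mul (I * τ))
  have hfv := (hv₂.add (hv₁.const_mul (I * τ))).star
  have := (hu₁.mul hfv).sub (hfu.mul hv₁.star)
  refine this.congr_deriv ?_
  simp only [magneticLaplacian, Pi.add_apply, star_def, map_add, map_sub, map_mul, map_neg,
    conj_I, conj_ofReal, map_ofNat]
  push_cast
  ring

theorem integral_magneticLaplacian_mul_conj_sub (hu : ContDiff ℝ 2 u) (hv : ContDiff ℝ 2 v)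
    (a b : ℝ) :
    (∫ x in a..b, magneticLaplacian τ u x * conj (v x)) -
        ∫ x in a..b, u x * conj (magneticLaplacian τ v x) =
      magneticWronskian τ u v b - magneticWronskian τ u v a := by
  have hLu := continuous_magneticLaplacian τ hu
  have hLv := continuous_magneticLaplacian τ hv
  have hcu := hu.continuous
  have hcv := hv.continuous
  rw [← integral_sub (Continuous.intervalIntegrable (by fun_prop) _ _)
    (Continuous.intervalIntegrable (by fun_prop) _ _)]
  exact integral_eq_sub_of_hasDerivAt (fun x _ => hasDerivAt_magneticWronskian τ hu hv x)
    (Continuous.intervalIntegrable (by fun_prop) _ _)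

theorem magneticWronskian_sub_of_quasiperiodic {w : ℂ} (hw : ‖w‖ = 1) {l : ℝ}
    (hu : u 0 = conj w * u l) (hv : v 0 = conj w * v l) :
    magneticWronskian τ u v 0 - magneticWronskian τ u v l =
      magneticFluxJump τ w l u * conj (v 0) - u 0 * conj (magneticFluxJump τ w l v) := by
  have hww : conj w * w = 1 := by
    rw [mul_comm, mul_conj, normSq_eq_norm_sq, hw]; norm_num
  simp only [magneticWronskian, magneticFluxJump, magneticFlux, hu, hv, map_add, map_mul,
    map_neg, conj_I, conj_ofReal, conj_conj]
  linear_combination -(deriv u l * conj (v l) - u l * conj (deriv v l)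
    + 2 * I * τ * u l * conj (v l)) * hww

end

theorem Ahom_symmetric_general (l₁ l₂ l₃ τ t σ : ℝ)
    (w : ℂ) (hw : ‖w‖ = 1)
    (u v : ℝ → ℂ) (β γ : ℂ)
    (hu : ContDiff ℝ 2 u) (hv : ContDiff ℝ 2 v)
    (hubc : u 0 = starRingEnd ℂ w * u l₂ ∧ u 0 = β / (Real.sqrt (l₁ + l₃) : ℂ))
    (hvbc : v 0 = starRingEnd ℂ w * v l₂ ∧ v 0 = γ / (Real.sqrt (l₁ + l₃) : ℂ))
    (A1 : (ℝ → ℂ) → ℝ → ℂ)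
    (hA1 : ∀ (f : ℝ → ℂ) (x : ℝ), A1 f x =
      -(deriv (deriv f) x) - 2 * Complex.I * τ * deriv f x + (τ ^ 2 : ℝ) * f x)
    (A2 : (ℝ → ℂ) → ℂ → ℂ)
    (hA2 : ∀ (f : ℝ → ℂ) (b : ℂ), A2 f b =
      (1 / (Real.sqrt (l₁ + l₃) : ℂ)) *
        (-(deriv f 0 + Complex.I * τ * f 0)
          + starRingEnd ℂ w * (deriv f l₂ + Complex.I * τ * f l₂)
          + ((σ * t) ^ 2 : ℝ) * b / (Real.sqrt (l₁ + l₃) : ℂ))) :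
    (∫ x in (0 : ℝ)..l₂, A1 u x * starRingEnd ℂ (v x)) +
        A2 u β * starRingEnd ℂ γ
      = (∫ x in (0 : ℝ)..l₂, u x * starRingEnd ℂ (A1 v x)) +
        β * starRingEnd ℂ (A2 v γ) := by
  set c : ℂ := ((Real.sqrt (l₁ + l₃) : ℝ) : ℂ)⁻¹
  have hc : conj c = c := by simp [c]
  have hA1' : A1 = magneticLaplacian τ := funext fun f => funext (hA1 f)
  have hA2' : ∀ f b, A2 f b = c * (magneticFluxJump τ w l₂ f + ((σ * t) ^ 2 : ℝ) * b * c) := by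
    intro f b
    rw [hA2, magneticFluxJump, magneticFlux, magneticFlux]
    ring
  have hu0 : u 0 = β * c := hubc.2
  have hv0 : v 0 = γ * c := hvbc.2
  have hGreen := integral_magneticLaplacian_mul_conj_sub τ hu hv 0 l₂
  have hBoundary := magneticWronskian_sub_of_quasiperiodic τ hw hubc.1 hvbc.1
  rw [hu0, hv0] at hBoundary
  rw [hA1', hA2', hA2']
  simp only [map_mul, map_add, hc, conj_ofReal] at hBoundary ⊢
  linear_combination hGreen - hBoundary

/-- Symmetry of the operator `A^hom_τ` of Section 8.1 on `L²(0,l₂) ⊕ ℂ`: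
for pairs `(u,β)`, `(v,γ)` in the domain (quasiperiodicity
`u(0) = w̄ u(l₂) = β/√(l₁+l₃)`), one has `⟨A(u,β),(v,γ)⟩ = ⟨(u,β),A(v,γ)⟩`. -/
theorem Ahom_symmetric (l₁ l₂ l₃ τ t σ : ℝ)
    (hl₁ : 0 < l₁) (hl₂ : 0 < l₂) (hl₃ : 0 < l₃)
    (w : ℂ) (hw : ‖w‖ = 1)
    (u v : ℝ → ℂ) (β γ : ℂ)
    (hu : ContDiff ℝ 2 u) (hv : ContDiff ℝ 2 v)
    (hubc : u 0 = starRingEnd ℂ w * u l₂ ∧ u 0 = β / (Real.sqrt (l₁ + l₃) : ℂ))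
    (hvbc : v 0 = starRingEnd ℂ w * v l₂ ∧ v 0 = γ / (Real.sqrt (l₁ + l₃) : ℂ))
    (A1 : (ℝ → ℂ) → ℝ → ℂ)
    (hA1 : ∀ (f : ℝ → ℂ) (x : ℝ), A1 f x =
      -(deriv (deriv f) x) - 2 * Complex.I * τ * deriv f x + (τ ^ 2 : ℝ) * f x)
    (A2 : (ℝ → ℂ) → ℂ → ℂ)
    (hA2 : ∀ (f : ℝ → ℂ) (b : ℂ), A2 f b =
      (1 / (Real.sqrt (l₁ + l₃) : ℂ)) *
        (-(deriv f 0 + Complex.I * τ * f 0)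
          + starRingEnd ℂ w * (deriv f l₂ + Complex.I * τ * f l₂)
          + ((σ * t) ^ 2 : ℝ) * b / (Real.sqrt (l₁ + l₃) : ℂ))) :
    (∫ x in (0 : ℝ)..l₂, A1 u x * starRingEnd ℂ (v x)) +
        A2 u β * starRingEnd ℂ γ
      = (∫ x in (0 : ℝ)..l₂, u x * starRingEnd ℂ (A1 v x)) +
        β * starRingEnd ℂ (A2 v γ) :=
  Ahom_symmetric_general l₁ l₂ l₃ τ t σ w hw u v β γ hu hv hubc hvbc A1 hA1 A2 hA2
end

section
/- Suppose r and R_norm are real-valued functions of τ ∈ (−δ, δ) satisfying: |r(τ) + α τ²| ≤ K τ² (a priori bound), R_norm(τ)² ≤ C(|τ| |r(τ)| R_norm(τ) + τ⁴ R_norm(τ) + r(τ)²), and |r(τ)| ≤ C(|τ| R_norm(τ) + τ⁴), with constants α, K, C > 0 and R_norm ≥ 0. Then there exists C' > 0 such that R_norm(τ) ≤ C'|τ|³ and |r(τ)| ≤ C'τ⁴ for all τ ∈ (−δ, δ). -/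
open Real

set_option maxHeartbeats 800000

lemma quad_bound_aux (x s a b : ℝ) (hx : 0 ≤ x) (hs : 0 ≤ s) (ha : 0 ≤ a) (hb : 0 ≤ b)
    (h : x ^ 2 ≤ a * (s * x) + b * s ^ 2) : x ≤ (a + b + 1) * s := by
  by_contra h'
  push_neg at h'
  have hxpos : 0 < x := lt_of_le_of_lt (by positivity) h'
  have hsx : s ≤ x := by nlinarith
  nlinarith [mul_lt_mul_of_pos_right h' hxpos, mul_le_mul_of_nonneg_left hsx hs,
    mul_nonneg hs hx]


/-- Bootstrap error estimate of Appendix B: from the a priori bound on `r`,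
the quadratic inequality on `R_norm` and the linear bound on `r`, one deduces
`R_norm(τ) ≤ C'|τ|³` and `|r(τ)| ≤ C'τ⁴`. -/
theorem bootstrap_estimates (δ α K C : ℝ) (hδ : 0 < δ) (hδ1 : δ ≤ 1)
    (hα : 0 < α) (hK : 0 < K) (hC : 0 < C)
    (r R : ℝ → ℝ)
    (hRnonneg : ∀ τ : ℝ, |τ| < δ → 0 ≤ R τ)
    (h1 : ∀ τ : ℝ, |τ| < δ → |r τ + α * τ ^ 2| ≤ K * τ ^ 2)
    (h2 : ∀ τ : ℝ, |τ| < δ →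
      R τ ^ 2 ≤ C * (|τ| * |r τ| * R τ + τ ^ 4 * R τ + r τ ^ 2))
    (h3 : ∀ τ : ℝ, |τ| < δ → |r τ| ≤ C * (|τ| * R τ + τ ^ 4)) :
    ∃ C' > (0 : ℝ), ∀ τ : ℝ, |τ| < δ →
      R τ ≤ C' * |τ| ^ 3 ∧ |r τ| ≤ C' * τ ^ 4 := by
  -- basic facts about |τ|
  have hbasic : ∀ τ : ℝ, |τ| < δ → |τ| ≤ 1 ∧ |τ| ^ 2 = τ ^ 2 ∧ |τ| ^ 4 = τ ^ 4 := by
    intro τ hτ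
    have h1 : |τ| ≤ 1 := le_of_lt (lt_of_lt_of_le hτ hδ1)
    have h2 : |τ| ^ 2 = τ ^ 2 := sq_abs τ
    exact ⟨h1, h2, by nlinarith⟩
  -- step 0 : a priori bound
  obtain ⟨K1, hK1pos, hr0⟩ : ∃ K1 > (0:ℝ), ∀ τ : ℝ, |τ| < δ → |r τ| ≤ K1 * τ ^ 2 := by
    refine ⟨α + K, by positivity, fun τ hτ => ?_⟩
    have h := h1 τ hτ
    have h' : |r τ| ≤ |r τ + α * τ ^ 2| + |α * τ ^ 2| := by
      calc |r τ| = |(r τ + α * τ ^ 2) + (-(α * τ ^ 2))| := by ring_nf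
        _ ≤ |r τ + α * τ ^ 2| + |(-(α * τ ^ 2))| := abs_add_le _ _
        _ = |r τ + α * τ ^ 2| + |α * τ ^ 2| := by rw [abs_neg]
    have habs : |α * τ ^ 2| = α * τ ^ 2 := by rw [abs_of_nonneg]; positivity
    nlinarith
  -- step 1 : R ≤ D1 τ²
  obtain ⟨D1, hD1pos, hR1⟩ : ∃ D1 > (0:ℝ), ∀ τ : ℝ, |τ| < δ → R τ ≤ D1 * τ ^ 2 := by
    refine ⟨C * (K1 + 1) + C * K1 ^ 2 + 1, by positivity, fun τ hτ => ?_⟩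
    obtain ⟨ht1, hsq, ht4⟩ := hbasic τ hτ
    have ht0 : (0:ℝ) ≤ |τ| := abs_nonneg τ
    have ht2 : (0:ℝ) ≤ τ ^ 2 := sq_nonneg τ
    have hτ2le1 : τ ^ 2 ≤ 1 := by nlinarith
    have hR0 := hRnonneg τ hτ
    have hrabs0 : (0:ℝ) ≤ |r τ| := abs_nonneg _
    have hr := hr0 τ hτ
    have hq := h2 τ hτ
    have b1 : |τ| * |r τ| * R τ ≤ |τ| * (K1 * τ ^ 2) * R τ :=
      mul_le_mul_of_nonneg_right (mul_le_mul_of_nonneg_left hr ht0) hR0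
    have b1' : |τ| * (K1 * τ ^ 2) * R τ ≤ K1 * τ ^ 2 * R τ := by
      have h0 : 0 ≤ (1 - |τ|) * (K1 * τ ^ 2) * R τ :=
        mul_nonneg (mul_nonneg (by linarith) (by positivity)) hR0
      nlinarith [h0]
    have b2 : τ ^ 4 * R τ ≤ τ ^ 2 * R τ := by
      apply mul_le_mul_of_nonneg_right _ hR0
      nlinarith [mul_nonneg ht2 (sub_nonneg.mpr hτ2le1)]
    have b3 : r τ ^ 2 ≤ K1 ^ 2 * (τ ^ 2) ^ 2 := by
      have := mul_le_mul hr hr hrabs0 (by positivity : (0:ℝ) ≤ K1 * τ ^ 2)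
      nlinarith [sq_abs (r τ)]
    have hsum : |τ| * |r τ| * R τ + τ ^ 4 * R τ + r τ ^ 2 ≤
        (K1 + 1) * (τ ^ 2 * R τ) + K1 ^ 2 * (τ ^ 2) ^ 2 := by nlinarith [b1, b1', b2, b3]
    have e : R τ ^ 2 ≤ (C * (K1 + 1)) * (τ ^ 2 * R τ) + (C * K1 ^ 2) * (τ ^ 2) ^ 2 := by
      have := mul_le_mul_of_nonneg_left hsum hC.le
      nlinarith [hq, this]
    have := quad_bound_aux (R τ) (τ ^ 2) (C * (K1 + 1)) (C * K1 ^ 2) hR0 ht2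
      (by positivity) (by positivity) e
    linarith
  -- step 2 : |r| ≤ C2 |τ|³
  obtain ⟨C2, hC2pos, hr2⟩ : ∃ C2 > (0:ℝ), ∀ τ : ℝ, |τ| < δ → |r τ| ≤ C2 * |τ| ^ 3 := by
    refine ⟨C * (D1 + 1), by positivity, fun τ hτ => ?_⟩
    obtain ⟨ht1, hsq, ht4⟩ := hbasic τ hτ
    have ht0 : (0:ℝ) ≤ |τ| := abs_nonneg τ
    have ht3 : (0:ℝ) ≤ |τ| ^ 3 := pow_nonneg ht0 3
    have hcube : |τ| * τ ^ 2 = |τ| ^ 3 := by rw [← hsq]; ring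
    have b : |τ| * R τ ≤ D1 * |τ| ^ 3 := by
      calc |τ| * R τ ≤ |τ| * (D1 * τ ^ 2) :=
            mul_le_mul_of_nonneg_left (hR1 τ hτ) ht0
        _ = D1 * (|τ| * τ ^ 2) := by ring
        _ = D1 * |τ| ^ 3 := by rw [hcube]
    have b2 : τ ^ 4 ≤ |τ| ^ 3 := by
      nlinarith [mul_nonneg ht3 (sub_nonneg.mpr ht1)]
    calc |r τ| ≤ C * (|τ| * R τ + τ ^ 4) := h3 τ hτ
      _ ≤ C * (D1 * |τ| ^ 3 + |τ| ^ 3) := mul_le_mul_of_nonneg_left (by linarith) hC.le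
      _ = C * (D1 + 1) * |τ| ^ 3 := by ring
  -- step 3 : R ≤ D3 |τ|³
  obtain ⟨D3, hD3pos, hR3⟩ : ∃ D3 > (0:ℝ), ∀ τ : ℝ, |τ| < δ → R τ ≤ D3 * |τ| ^ 3 := by
    refine ⟨C * (C2 + 1) + C * C2 ^ 2 + 1, by positivity, fun τ hτ => ?_⟩
    obtain ⟨ht1, hsq, ht4⟩ := hbasic τ hτ
    have ht0 : (0:ℝ) ≤ |τ| := abs_nonneg τ
    have ht3 : (0:ℝ) ≤ |τ| ^ 3 := pow_nonneg ht0 3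
    have hR0 := hRnonneg τ hτ
    have hrabs0 : (0:ℝ) ≤ |r τ| := abs_nonneg _
    have hr := hr2 τ hτ
    have hq := h2 τ hτ
    have b1 : |τ| * |r τ| * R τ ≤ |τ| * (C2 * |τ| ^ 3) * R τ :=
      mul_le_mul_of_nonneg_right (mul_le_mul_of_nonneg_left hr ht0) hR0
    have b1' : |τ| * (C2 * |τ| ^ 3) * R τ ≤ C2 * |τ| ^ 3 * R τ := by
      have h0 : 0 ≤ (1 - |τ|) * (C2 * |τ| ^ 3) * R τ :=
        mul_nonneg (mul_nonneg (by linarith) (by positivity)) hR0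
      nlinarith [h0]
    have b2 : τ ^ 4 * R τ ≤ |τ| ^ 3 * R τ := by
      apply mul_le_mul_of_nonneg_right _ hR0
      nlinarith [mul_nonneg ht3 (sub_nonneg.mpr ht1)]
    have b3 : r τ ^ 2 ≤ C2 ^ 2 * (|τ| ^ 3) ^ 2 := by
      have := mul_le_mul hr hr hrabs0 (by positivity : (0:ℝ) ≤ C2 * |τ| ^ 3)
      nlinarith [sq_abs (r τ)]
    have hsum : |τ| * |r τ| * R τ + τ ^ 4 * R τ + r τ ^ 2 ≤
        (C2 + 1) * (|τ| ^ 3 * R τ) + C2 ^ 2 * (|τ| ^ 3) ^ 2 := by nlinarith [b1, b1', b2, b3]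
    have e : R τ ^ 2 ≤ (C * (C2 + 1)) * (|τ| ^ 3 * R τ) + (C * C2 ^ 2) * (|τ| ^ 3) ^ 2 := by
      have := mul_le_mul_of_nonneg_left hsum hC.le
      nlinarith [hq, this]
    have := quad_bound_aux (R τ) (|τ| ^ 3) (C * (C2 + 1)) (C * C2 ^ 2) hR0 ht3
      (by positivity) (by positivity) e
    linarith
  -- step 4 : |r| ≤ C4 τ⁴
  obtain ⟨C4, hC4pos, hr4⟩ : ∃ C4 > (0:ℝ), ∀ τ : ℝ, |τ| < δ → |r τ| ≤ C4 * τ ^ 4 := by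
    refine ⟨C * (D3 + 1), by positivity, fun τ hτ => ?_⟩
    obtain ⟨ht1, hsq, ht4⟩ := hbasic τ hτ
    have ht0 : (0:ℝ) ≤ |τ| := abs_nonneg τ
    have hquar : |τ| * |τ| ^ 3 = τ ^ 4 := by rw [← ht4]; ring
    have b : |τ| * R τ ≤ D3 * τ ^ 4 := by
      calc |τ| * R τ ≤ |τ| * (D3 * |τ| ^ 3) :=
            mul_le_mul_of_nonneg_left (hR3 τ hτ) ht0
        _ = D3 * (|τ| * |τ| ^ 3) := by ring
        _ = D3 * τ ^ 4 := by rw [hquar]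
    calc |r τ| ≤ C * (|τ| * R τ + τ ^ 4) := h3 τ hτ
      _ ≤ C * (D3 * τ ^ 4 + τ ^ 4) := mul_le_mul_of_nonneg_left (by linarith) hC.le
      _ = C * (D3 + 1) * τ ^ 4 := by ring
  refine ⟨D3 + C4, by positivity, fun τ hτ => ⟨?_, ?_⟩⟩
  · have := hR3 τ hτ
    have : 0 ≤ C4 * |τ| ^ 3 := by positivity
    linarith [hR3 τ hτ]
  · have h4 : (0:ℝ) ≤ D3 * τ ^ 4 := by positivity
    linarith [hr4 τ hτ]
end
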